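/- Assume d_0 = 0 and that the sequence e is symmetric, i.e. e_i = e_{m+1−i} for i = 1, …, m. Then for all 0 ≤ i ≤ m and all 1 ≤ j ≤ m one has α(d,i)_j + α(d,m−i)_{m+1−j} = λ_1 + e_1 = d_m − m + 1. (The partitions α(d,i) and α(d,m−i) are complementary with respect to the rectangle with m rows of length λ_1 + e_1; this is the combinatorial content of the GL(E)-equivariant self-duality F(d)* ≅ F(d) of Proposition 3.5.) -/
import Mathlib


/-- `lam m d j` is `λ_j = e_0 + Σ_{k=j+1}^m (e_k - 1)` where `e_0 = d 0` and
`e_k = d k - d (k-1)`. -/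
def lam (m : ℕ) (d : ℕ → ℤ) (j : ℕ) : ℤ :=
  d 0 + ∑ k ∈ Finset.Ioc j m, (d k - d (k - 1) - 1)

/-- `alpha m d i j` is the `j`-th entry (for `1 ≤ j ≤ m`) of the partition `α(d,i)`. -/
def alpha (m : ℕ) (d : ℕ → ℤ) (i j : ℕ) : ℤ :=
  lam m d j + if j ≤ i then d j - d (j - 1) else 0

private lemma tele (d : ℕ → ℤ) : ∀ n, ∀ j ≤ n,
    ∑ k ∈ Finset.Ioc j n, (d k - d (k - 1) - 1) = d n - d j - ((n : ℤ) - j) := by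
  intro n
  induction n with
  | zero => intro j hj; interval_cases j; simp
  | succ n ih =>
    intro j hj
    rcases Nat.lt_or_ge j (n + 1) with h | h
    · have hjn : j ≤ n := Nat.lt_succ_iff.mp h
      rw [Finset.sum_Ioc_succ_top hjn, ih j hjn]
      push_cast
      ring
    · have : j = n + 1 := le_antisymm hj h
      subst this
      simp

private lemma lam_eq (m : ℕ) (d : ℕ → ℤ) (j : ℕ) (hj : j ≤ m) :
    lam m d j = d 0 + d m - d j - ((m : ℤ) - j) := by
  rw [lam, tele d m j hj]; ring

/-- **Combinatorial content of the self-duality of Proposition 3.5.**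
If `d 0 = 0` and the sequence `e` is symmetric (`e_i = e_{m+1-i}` for `1 ≤ i ≤ m`),
then `α(d,i)` and `α(d,m-i)` are complementary in the `m × (λ_1 + e_1)` rectangle:
`α(d,i)_j + α(d,m-i)_{m+1-j} = λ_1 + e_1 = d_m - m + 1`. -/
theorem alpha_complementary_of_symmetric (m : ℕ) (hm : 1 ≤ m)
    (d : ℕ → ℤ) (hd : ∀ i < m, d i < d (i + 1)) (h0 : d 0 = 0)
    (hsym : ∀ i, 1 ≤ i → i ≤ m → d i - d (i - 1) = d (m + 1 - i) - d (m - i)) :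
    (∀ i ≤ m, ∀ j, 1 ≤ j → j ≤ m →
      alpha m d i j + alpha m d (m - i) (m + 1 - j) = lam m d 1 + (d 1 - d 0)) ∧
    lam m d 1 + (d 1 - d 0) = d m - m + 1 := by
  -- key symmetry: d (m - j) = d m - d j for j ≤ m
  have key : ∀ j ≤ m, d (m - j) = d m - d j := by
    intro j
    induction j with
    | zero => simp [h0]
    | succ j ih =>
      intro hj
      have hjm : j ≤ m := Nat.le_of_succ_le hj
      have hs := hsym (j + 1) (by omega) hj
      have e1 : m + 1 - (j + 1) = m - j := by omega
      have e3 : (j + 1) - 1 = j := rfl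
      rw [e1, e3] at hs
      have ihh := ih hjm
      linarith [hs, ihh]
  constructor
  · intro i hi j hj1 hjm
    have hlj := lam_eq m d j hjm
    have hlj' := lam_eq m d (m + 1 - j) (by omega)
    have hl1 := lam_eq m d 1 hm
    have hmj : d (m + 1 - j) = d m - d (j - 1) := by
      have e : m + 1 - j = m - (j - 1) := by omega
      rw [e, key (j - 1) (by omega)]
    have hc : ((m + 1 - j : ℕ) : ℤ) = (m : ℤ) + 1 - j := by
      have : j ≤ m + 1 := by omega
      push_cast [Nat.cast_sub this]; ring
    unfold alpha
    rw [hlj, hlj', hl1, hmj, h0, hc]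
    by_cases hji : j ≤ i
    · have hnot : ¬ (m + 1 - j ≤ m - i) := by omega
      rw [if_pos hji, if_neg hnot]
      push_cast
      ring
    · have hyes : m + 1 - j ≤ m - i := by omega
      rw [if_neg hji, if_pos hyes]
      have e1 : m + 1 - j - 1 = m - j := by omega
      rw [e1, key j hjm]
      push_cast
      ring
  · rw [lam_eq m d 1 hm, h0]
    push_cast
    ring
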